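/- For every real a and b, the number of complex solutions z of conj(z)^4 = z^2 + a*z + b, with (a,b) chosen in an unbounded connected component of the complement of the discriminantal curve, is at least 4 and at most 6; concretely, for each of the parameter choices (a,b) ∈ {(4,0), (0,-4), (-4,0), (0,4)}, the solution set of conj(z)^4 = z^2 + a*z + b is finite with cardinality at least 4 and at most 6. -/

import Mathlib

/-!
Write `z = x + iy`. The imaginary part of `conj z ^ 4 = z ^ 2 + a z + b` is divisible by `y`, so
the zeros lie on the real axis or on a curve along which the real part becomes a one-variable
equation. For `a = 0` everything reduces to quadratics in `x²` and `y²`, giving exactly four zeros.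
For `(a, b) = (4, 0)` the real axis carries `0` and the real root of `x³ = x + 4`; on the curve
`2xy² = 2x³ + x + 2` the abscissa is a root of a sextic with exactly two real roots (isolated by
sign changes and monotonicity on short intervals), each carrying a conjugate pair: six zeros.
The case `(-4, 0)` is the image of `(4, 0)` under `z ↦ -z`.
-/

open Complex Set

theorem sq_eq_iff_of_pos {x p : ℝ} (hp : 0 < p) : x ^ 2 = p ↔ x = √p ∨ x = -√p := by
  rw [← sq_eq_sq_iff_eq_or_eq_neg, Real.sq_sqrt hp.le]

theorem mul_sq_eq_iff {x c y : ℝ} (h : 0 < c / x) :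
    x * y ^ 2 = c ↔ y = √(c / x) ∨ y = -√(c / x) := by
  have hx : x ≠ 0 := by rintro rfl; simp at h
  rw [← sq_eq_iff_of_pos h, eq_div_iff hx, mul_comm]

theorem finite_and_four_le_ncard_and_ncard_le_six {α : Type*} {s : Set α} (h : s.ncard = 4) :
    s.Finite ∧ 4 ≤ s.ncard ∧ s.ncard ≤ 6 :=
  ⟨finite_of_ncard_ne_zero (by omega), by omega, by omega⟩

theorem ncard_setOf_re_sq_and_im_sq {p q : ℝ} (hp : 0 < p) (hq : 0 < q) :
    {z : ℂ | z.re ^ 2 = p ∧ z.im ^ 2 = q}.ncard = 4 := by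
  have hp' := Real.sqrt_pos.2 hp
  have hq' := Real.sqrt_pos.2 hq
  refine Set.ncard_eq_four.2 ⟨⟨√p, √q⟩, ⟨√p, -√q⟩, ⟨-√p, √q⟩, ⟨-√p, -√q⟩, ?_⟩
  simp only [ne_eq, Set.ext_iff, Set.mem_ofPred_eq, Set.mem_insert_iff,
    Set.mem_singleton_iff, Complex.ext_iff, sq_eq_iff_of_pos hp, sq_eq_iff_of_pos hq]
  refine ⟨?_, ?_, ?_, ?_, ?_, ?_, fun z => by tauto⟩ <;> intro h <;> linarith [h.1, h.2]

theorem ncard_setOf_re_sq_or_im_sq {p q : ℝ} (hp : 0 < p) (hq : 0 < q) :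
    {z : ℂ | z.im = 0 ∧ z.re ^ 2 = p ∨ z.re = 0 ∧ z.im ^ 2 = q}.ncard = 4 := by
  have hp' := Real.sqrt_pos.2 hp
  have hq' := Real.sqrt_pos.2 hq
  refine Set.ncard_eq_four.2 ⟨⟨√p, 0⟩, ⟨-√p, 0⟩, ⟨0, √q⟩, ⟨0, -√q⟩, ?_⟩
  simp only [ne_eq, Set.ext_iff, Set.mem_ofPred_eq, Set.mem_insert_iff,
    Set.mem_singleton_iff, Complex.ext_iff, sq_eq_iff_of_pos hp, sq_eq_iff_of_pos hq]
  refine ⟨?_, ?_, ?_, ?_, ?_, ?_, fun z => by tauto⟩ <;> intro h <;> linarith [h.1, h.2]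

namespace ConjQuartic

def zeroSet (a b : ℝ) : Set ℂ :=
  {z : ℂ | (starRingEnd ℂ z) ^ 4 = z ^ 2 + (a : ℂ) * z + (b : ℂ)}

theorem mem_zeroSet_iff {a b : ℝ} {z : ℂ} :
    z ∈ zeroSet a b ↔
      z.re ^ 4 - 6 * z.re ^ 2 * z.im ^ 2 + z.im ^ 4 = z.re ^ 2 - z.im ^ 2 + a * z.re + b ∧
      4 * z.re * z.im * (z.im ^ 2 - z.re ^ 2) = 2 * z.re * z.im + a * z.im := by
  rw [zeroSet, Set.mem_ofPred_eq, Complex.ext_iff]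
  simp only [pow_succ, pow_zero, one_mul, mul_re, mul_im, add_re, add_im, conj_re, conj_im,
    ofReal_re, ofReal_im]
  constructor <;> rintro ⟨h1, h2⟩ <;> exact ⟨by linear_combination h1, by linear_combination h2⟩

theorem zeroSet_neg_left (a b : ℝ) : zeroSet (-a) b = -zeroSet a b := by
  ext z
  simp only [Set.mem_neg, zeroSet, Set.mem_ofPred_eq, map_neg, ofReal_neg]
  ring_nf

theorem zeroSet_zero_neg_four :
    zeroSet 0 (-4) = {z : ℂ | z.re ^ 2 = (2 * √5 - 1) / 4 ∧ z.im ^ 2 = (2 * √5 + 1) / 4} := by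
  have h5 : √5 ^ 2 = 5 := Real.sq_sqrt (by norm_num)
  have h5' : 2 < √5 := by nlinarith [Real.sqrt_nonneg 5]
  ext z
  rw [mem_zeroSet_iff, Set.mem_ofPred_eq]
  set x := z.re
  set y := z.im
  constructor
  · rintro ⟨h_re, h_im⟩
    have hx : x ≠ 0 := by rintro hx; rw [hx] at h_re; nlinarith [sq_nonneg y]
    have hy : y ≠ 0 := by rintro hy; rw [hy] at h_re; nlinarith [sq_nonneg (2 * x ^ 2 - 1)]
    have hyx : y ^ 2 = x ^ 2 + 1 / 2 := by
      have : (x * y) * (2 * (y ^ 2 - x ^ 2) - 1) = 0 := by linear_combination h_im / 2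
      rcases mul_eq_zero.1 this with h | h
      · exact absurd h (mul_ne_zero hx hy)
      · linarith
    have hx2 : x ^ 2 = (2 * √5 - 1) / 4 := by
      have : (x ^ 2 - (2 * √5 - 1) / 4) * (x ^ 2 + (2 * √5 + 1) / 4) = 0 := by
        linear_combination -h_re / 4 + (y ^ 2 - 5 * x ^ 2 + 3 / 2) / 4 * hyx - h5 / 4
      rcases mul_eq_zero.1 this with h | h
      · linarith
      · nlinarith [sq_nonneg x]
    exact ⟨hx2, by linarith⟩
  · rintro ⟨hx, hy⟩
    refine ⟨?_, ?_⟩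
    · linear_combination (x ^ 2 + (2 * √5 - 1) / 4 - 6 * y ^ 2 - 1) * hx
        + (y ^ 2 + (2 * √5 + 1) / 4 - 6 * (2 * √5 - 1) / 4 + 1) * hy - h5
    · linear_combination (4 * x * y) * hy - (4 * x * y) * hx

theorem ncard_zeroSet_zero_neg_four : (zeroSet 0 (-4)).ncard = 4 := by
  have h5 : 1 < √5 := by rw [Real.lt_sqrt zero_le_one]; norm_num
  rw [zeroSet_zero_neg_four]
  exact ncard_setOf_re_sq_and_im_sq (by linarith) (by positivity)

theorem zeroSet_zero_four :
    zeroSet 0 4 = {z : ℂ | z.im = 0 ∧ z.re ^ 2 = (√17 + 1) / 2 ∨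
      z.re = 0 ∧ z.im ^ 2 = (√17 - 1) / 2} := by
  have h17 : √17 ^ 2 = 17 := Real.sq_sqrt (by norm_num)
  have h17' : 4 < √17 := by nlinarith [Real.sqrt_nonneg 17]
  ext z
  rw [mem_zeroSet_iff, Set.mem_ofPred_eq]
  set x := z.re
  set y := z.im
  constructor
  · rintro ⟨h_re, h_im⟩
    have : x * y * (2 * (y ^ 2 - x ^ 2) - 1) = 0 := by linear_combination h_im / 2
    rcases mul_eq_zero.1 this with hxy | h
    · rcases mul_eq_zero.1 hxy with hx | hy
      · refine Or.inr ⟨hx, ?_⟩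
        rw [hx] at h_re
        have : (y ^ 2 - (√17 - 1) / 2) * (y ^ 2 + (√17 + 1) / 2) = 0 := by
          linear_combination h_re - h17 / 4
        rcases mul_eq_zero.1 this with h | h
        · linarith
        · nlinarith [sq_nonneg y]
      · refine Or.inl ⟨hy, ?_⟩
        rw [hy] at h_re
        have : (x ^ 2 - (√17 + 1) / 2) * (x ^ 2 + (√17 - 1) / 2) = 0 := by
          linear_combination h_re - h17 / 4
        rcases mul_eq_zero.1 this with h | h
        · linarith
        · nlinarith [sq_nonneg x]
    · have hyx : y ^ 2 = x ^ 2 + 1 / 2 := by linarith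
      rw [hyx] at h_re
      nlinarith [sq_nonneg x, sq_nonneg (x ^ 2)]
  · rintro (⟨hy, hx⟩ | ⟨hx, hy⟩) <;> rw [hx, hy] <;> refine ⟨?_, by ring⟩
    · linear_combination (x ^ 2 + (√17 + 1) / 2) * hx + h17 / 4
    · linear_combination (y ^ 2 + (√17 - 1) / 2) * hy + h17 / 4

theorem ncard_zeroSet_zero_four : (zeroSet 0 4).ncard = 4 := by
  have h17 : 1 < √17 := by rw [Real.lt_sqrt zero_le_one]; norm_num
  rw [zeroSet_zero_four]
  exact ncard_setOf_re_sq_or_im_sq (by positivity) (by linarith)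

-- The real part of the equation for `(a, b) = (4, 0)`, with `y²` eliminated through the
-- imaginary part `2xy² = 2x³ + x + 2`.
def sextic (x : ℝ) : ℝ := 16 * x ^ 6 + 8 * x ^ 4 + 32 * x ^ 3 - 3 * x ^ 2 - 8 * x - 4

def sexticSlope (x y : ℝ) : ℝ :=
  16 * (x ^ 5 + x ^ 4 * y + x ^ 3 * y ^ 2 + x ^ 2 * y ^ 3 + x * y ^ 4 + y ^ 5)
    + 8 * (x ^ 3 + x ^ 2 * y + x * y ^ 2 + y ^ 3) + 32 * (x ^ 2 + x * y + y ^ 2) - 3 * (x + y) - 8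

theorem sextic_sub_sextic (x y : ℝ) : sextic y - sextic x = (y - x) * sexticSlope x y := by
  unfold sextic sexticSlope
  ring

theorem continuous_sextic : Continuous sextic := by
  unfold sextic
  fun_prop

theorem sextic_pos_of_le {x : ℝ} (h : x ≤ -6 / 5) : 0 < sextic x := by
  unfold sextic
  nlinarith [sq_nonneg (x + 6 / 5), sq_nonneg (x ^ 2 + x), sq_nonneg x, sq_nonneg (x ^ 3 + 1),
    sq_nonneg (x ^ 2 - 6 / 5 * x), sq_nonneg (x ^ 3 - x)]

theorem sextic_neg_of_mem_Icc {x : ℝ} (hx : x ∈ Icc (-11 / 10) (3 / 5)) : sextic x < 0 := by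
  obtain ⟨h1, h2⟩ := hx
  have h := mul_nonneg (sub_nonneg.2 h1) (sub_nonneg.2 h2)
  unfold sextic
  nlinarith [sq_nonneg x, sq_nonneg (x ^ 2), sq_nonneg (x ^ 3), mul_nonneg h (sq_nonneg x)]

theorem sextic_pos_of_ge {x : ℝ} (h : 7 / 10 ≤ x) : 0 < sextic x := by
  unfold sextic
  nlinarith [sq_nonneg (x - 7 / 10), sq_nonneg x, sq_nonneg (x ^ 2 - 1), sq_nonneg (x ^ 3 - 1)]

theorem sexticSlope_neg {x y : ℝ} (hx : x ∈ Icc (-6 / 5) (-11 / 10))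
    (hy : y ∈ Icc (-6 / 5) (-11 / 10)) : sexticSlope x y < 0 := by
  obtain ⟨hx1, hx2⟩ := hx
  obtain ⟨hy1, hy2⟩ := hy
  have hxy : 121 / 100 ≤ x * y := by nlinarith
  have hxx : 121 / 100 ≤ x ^ 2 := by nlinarith
  have hyy : 121 / 100 ≤ y ^ 2 := by nlinarith
  unfold sexticSlope
  nlinarith [mul_le_mul hxx hyy (by norm_num) (by positivity),
    mul_le_mul hxy hxx (by norm_num) (by positivity),
    mul_le_mul hxy hyy (by norm_num) (by positivity),
    mul_le_mul hxx hxx (by norm_num) (by positivity),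
    mul_le_mul hyy hyy (by norm_num) (by positivity)]

theorem sexticSlope_pos {x y : ℝ} (hx : x ∈ Icc (3 / 5) (7 / 10))
    (hy : y ∈ Icc (3 / 5) (7 / 10)) : 0 < sexticSlope x y := by
  obtain ⟨hx1, hx2⟩ := hx
  obtain ⟨hy1, hy2⟩ := hy
  have hx : 0 < x := by linarith
  have hy : 0 < y := by linarith
  have h_odd : 0 < 16 * (x ^ 5 + x ^ 4 * y + x ^ 3 * y ^ 2 + x ^ 2 * y ^ 3 + x * y ^ 4 + y ^ 5)
      + 8 * (x ^ 3 + x ^ 2 * y + x * y ^ 2 + y ^ 3) := by positivity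
  unfold sexticSlope
  nlinarith [mul_le_mul hx1 hy1 (by norm_num) hx.le, mul_le_mul hx1 hx1 (by norm_num) hx.le,
    mul_le_mul hy1 hy1 (by norm_num) hy.le]

theorem sextic_strictAntiOn : StrictAntiOn sextic (Icc (-6 / 5) (-11 / 10)) := by
  intro x hx y hy hxy
  have := sextic_sub_sextic x y
  nlinarith [mul_neg_of_pos_of_neg (sub_pos.2 hxy) (sexticSlope_neg hx hy)]

theorem sextic_strictMonoOn : StrictMonoOn sextic (Icc (3 / 5) (7 / 10)) := by
  intro x hx y hy hxy
  have := sextic_sub_sextic x y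
  nlinarith [mul_pos (sub_pos.2 hxy) (sexticSlope_pos hx hy)]

theorem exists_sextic_roots : ∃ α ∈ Icc (-6 / 5 : ℝ) (-11 / 10), ∃ β ∈ Icc (3 / 5 : ℝ) (7 / 10),
    ∀ x, sextic x = 0 ↔ x = α ∨ x = β := by
  obtain ⟨α, hα, hα0⟩ := intermediate_value_Icc' (by norm_num) continuous_sextic.continuousOn
    (show (0 : ℝ) ∈ Icc (sextic (-11 / 10)) (sextic (-6 / 5)) by norm_num [sextic])
  obtain ⟨β, hβ, hβ0⟩ := intermediate_value_Icc (by norm_num) continuous_sextic.continuousOn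
    (show (0 : ℝ) ∈ Icc (sextic (3 / 5)) (sextic (7 / 10)) by norm_num [sextic])
  refine ⟨α, hα, β, hβ, fun x => ⟨fun hx => ?_, by rintro (rfl | rfl) <;> assumption⟩⟩
  by_cases h1 : x < -6 / 5
  · exact absurd hx (sextic_pos_of_le h1.le).ne'
  by_cases h2 : x ≤ -11 / 10
  · exact Or.inl (sextic_strictAntiOn.injOn ⟨by linarith, h2⟩ hα (hx.trans hα0.symm))
  by_cases h3 : x < 3 / 5
  · exact absurd hx (sextic_neg_of_mem_Icc ⟨by linarith, h3.le⟩).ne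
  by_cases h4 : x ≤ 7 / 10
  · exact Or.inr (sextic_strictMonoOn.injOn ⟨by linarith, h4⟩ hβ (hx.trans hβ0.symm))
  exact absurd hx (sextic_pos_of_ge (by linarith)).ne'

theorem existsUnique_cubic_root : ∃! r : ℝ, r ^ 3 - r - 4 = 0 := by
  obtain ⟨r, ⟨hr1, -⟩, hr⟩ := intermediate_value_Icc (by norm_num : (3 / 2 : ℝ) ≤ 2)
    (by fun_prop : Continuous fun x : ℝ => x ^ 3 - x - 4).continuousOn
    (show (0 : ℝ) ∈ Icc _ _ by norm_num)
  refine ⟨r, hr, fun x hx => ?_⟩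
  have : (x - r) * ((x + r / 2) ^ 2 + 3 / 4 * r ^ 2 - 1) = 0 := by linear_combination hx - hr
  have hpos : 0 < (x + r / 2) ^ 2 + 3 / 4 * r ^ 2 - 1 := by nlinarith [sq_nonneg (x + r / 2)]
  linarith [(mul_eq_zero.1 this).resolve_right hpos.ne']

theorem mem_zeroSet_four_zero_iff {z : ℂ} :
    z ∈ zeroSet 4 0 ↔ z.im = 0 ∧ z.re * (z.re ^ 3 - z.re - 4) = 0 ∨
      sextic z.re = 0 ∧ 2 * z.re * z.im ^ 2 = 2 * z.re ^ 3 + z.re + 2 := by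
  rw [mem_zeroSet_iff]
  set x := z.re
  set y := z.im
  constructor
  · rintro ⟨h_re, h_im⟩
    by_cases hy : y = 0
    · refine Or.inl ⟨hy, ?_⟩
      rw [hy] at h_re
      linear_combination h_re
    have hU : 2 * x * y ^ 2 = 2 * x ^ 3 + x + 2 := by
      have : y * (4 * x * y ^ 2 - 4 * x ^ 3 - 2 * x - 4) = 0 := by linear_combination h_im
      linarith [(mul_eq_zero.1 this).resolve_left hy]
    refine Or.inr ⟨?_, hU⟩
    unfold sextic
    linear_combination (-4 * x ^ 2) * h_re - (10 * x ^ 3 - 3 * x - 2 - 2 * x * y ^ 2) * hU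
  · rintro (⟨hy, hx⟩ | ⟨hQ, hU⟩)
    · rw [hy]
      exact ⟨by linear_combination hx, by ring⟩
    have hx : x ≠ 0 := by rintro hx; rw [hx] at hU; norm_num at hU
    refine ⟨?_, by linear_combination (2 * y) * hU⟩
    have : 4 * x ^ 2 * (x ^ 4 - 6 * x ^ 2 * y ^ 2 + y ^ 4 - (x ^ 2 - y ^ 2 + 4 * x + 0)) = 0 := by
      unfold sextic at hQ
      linear_combination (-1) * hQ - (10 * x ^ 3 - 3 * x - 2 - 2 * x * y ^ 2) * hU
    linarith [(mul_eq_zero.1 this).resolve_left (by positivity)]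

theorem zeroSet_four_zero_bounds :
    (zeroSet 4 0).Finite ∧ 4 ≤ (zeroSet 4 0).ncard ∧ (zeroSet 4 0).ncard ≤ 6 := by
  obtain ⟨r, hr0, hr⟩ := existsUnique_cubic_root
  have hcubic (x : ℝ) : x ^ 3 - x - 4 = 0 ↔ x = r := ⟨hr x, fun h => h ▸ hr0⟩
  obtain ⟨α, ⟨hα1, hα2⟩, β, ⟨hβ1, hβ2⟩, hroots⟩ := exists_sextic_roots
  have hcα : 0 < (2 * α ^ 3 + α + 2) / (2 * α) :=
    div_pos_of_neg_of_neg (by nlinarith [sq_nonneg (α + 11 / 10)]) (by linarith)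
  have hβ : 0 < β := by linarith
  have hcβ : 0 < (2 * β ^ 3 + β + 2) / (2 * β) := by positivity
  set u := √((2 * α ^ 3 + α + 2) / (2 * α))
  set v := √((2 * β ^ 3 + β + 2) / (2 * β))
  have hmem : ∀ z : ℂ, z ∈ zeroSet 4 0 ↔ z.im = 0 ∧ (z.re = 0 ∨ z.re = r) ∨
      z.re = α ∧ (z.im = u ∨ z.im = -u) ∨ z.re = β ∧ (z.im = v ∨ z.im = -v) := by
    intro z
    rw [mem_zeroSet_four_zero_iff, mul_eq_zero, hcubic, hroots, or_and_right]
    refine or_congr Iff.rfl (or_congr ?_ ?_) <;> refine and_congr_right fun h => ?_ <;> rw [h]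
    exacts [mul_sq_eq_iff hcα, mul_sq_eq_iff hcβ]
  have hupper : zeroSet 4 0 ⊆
      (({0, (r : ℂ), ⟨α, u⟩, ⟨α, -u⟩, ⟨β, v⟩, ⟨β, -v⟩} : Finset ℂ) : Set ℂ) := by
    intro z hz
    simp only [Finset.coe_insert, Finset.coe_singleton, Set.mem_insert_iff, Set.mem_singleton_iff,
      Complex.ext_iff, zero_re, zero_im, ofReal_re, ofReal_im]
    rcases (hmem z).1 hz with ⟨h0, h | h⟩ | ⟨h, h0 | h0⟩ | ⟨h, h0 | h0⟩ <;> simp [h, h0]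
  have hlower : ({⟨α, u⟩, ⟨α, -u⟩, ⟨β, v⟩, ⟨β, -v⟩} : Set ℂ) ⊆ zeroSet 4 0 := by
    rintro z (rfl | rfl | rfl | rfl) <;> simp [hmem]
  have hfin : (zeroSet 4 0).Finite := (Finset.finite_toSet _).subset hupper
  refine ⟨hfin, ?_, ?_⟩
  · have hu : 0 < u := Real.sqrt_pos.2 hcα
    have hv : 0 < v := Real.sqrt_pos.2 hcβ
    have hαβ : α ≠ β := by linarith
    have hfour : ({⟨α, u⟩, ⟨α, -u⟩, ⟨β, v⟩, ⟨β, -v⟩} : Set ℂ).ncard = 4 := by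
      refine Set.ncard_eq_four.2 ⟨_, _, _, _, ?_, ?_, ?_, ?_, ?_, ?_, rfl⟩ <;>
        simp only [ne_eq, Complex.mk.injEq, hαβ, false_and, not_false_eq_true, true_and] <;>
        intro h <;> linarith
    exact hfour.symm.le.trans (Set.ncard_le_ncard hlower hfin)
  · exact (Set.ncard_le_ncard hupper (Finset.finite_toSet _)).trans
      ((Set.ncard_coe_finset _).trans_le Finset.card_le_six)

end ConjQuartic

/-- for each of the representative parameter choices
`(a, b) ∈ {(4,0), (0,-4), (-4,0), (0,4)}` (one in each unbounded connected
component of the complement of the discriminantal curve), the solution set of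
`conj z ^ 4 = z ^ 2 + a z + b` is finite with between 4 and 6 elements. -/
theorem stmt_9 :
    ∀ a b : ℝ, (a, b) ∈ ({(4, 0), (0, -4), (-4, 0), (0, 4)} : Set (ℝ × ℝ)) →
      {z : ℂ | (starRingEnd ℂ z) ^ 4 = z ^ 2 + (a : ℂ) * z + (b : ℂ)}.Finite ∧
      4 ≤ {z : ℂ | (starRingEnd ℂ z) ^ 4 = z ^ 2 + (a : ℂ) * z + (b : ℂ)}.ncard ∧
      {z : ℂ | (starRingEnd ℂ z) ^ 4 = z ^ 2 + (a : ℂ) * z + (b : ℂ)}.ncard ≤ 6 := by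
  intro a b hab
  change (ConjQuartic.zeroSet a b).Finite ∧ 4 ≤ (ConjQuartic.zeroSet a b).ncard ∧
    (ConjQuartic.zeroSet a b).ncard ≤ 6
  simp only [Set.mem_insert_iff, Set.mem_singleton_iff, Prod.mk.injEq] at hab
  rcases hab with ⟨rfl, rfl⟩ | ⟨rfl, rfl⟩ | ⟨rfl, rfl⟩ | ⟨rfl, rfl⟩
  · exact ConjQuartic.zeroSet_four_zero_bounds
  · exact finite_and_four_le_ncard_and_ncard_le_six ConjQuartic.ncard_zeroSet_zero_neg_four
  · rw [ConjQuartic.zeroSet_neg_left, Set.finite_neg, Set.ncard_neg]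
    exact ConjQuartic.zeroSet_four_zero_bounds
  · exact finite_and_four_le_ncard_and_ncard_le_six ConjQuartic.ncard_zeroSet_zero_four
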